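/- For every t ∈ [0, T], the integrals of the absolute values of the entries of the Green's matrix are independent of t and equal: ∫₀ᵀ |G_{1,1}(t,s)| ds = ∫₀ᵀ |G_{2,2}(t,s)| ds = (1/(ω |sin(ωT/2)|)) ∫₀^{ωT/2} |sin u| du, ∫₀ᵀ |G_{1,2}(t,s)| ds = (σ/(4ω² |sin(ωT/2)|)) ∫₀^{ωT/2} |cos u| du, and ∫₀ᵀ |G_{2,1}(t,s)| ds = (4/(σ |sin(ωT/2)|)) ∫₀^{ωT/2} |cos u| du. -/

import Mathlib

/-- The matrix A with rows (0, −σ/4) and (μ²/σ, 0). -/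
noncomputable def planktonA (μ σ : ℝ) : Matrix (Fin 2) (Fin 2) ℝ :=
  !![0, -σ / 4; μ ^ 2 / σ, 0]

/-- J = I₂ − exp(TA). -/
noncomputable def planktonJ (μ σ T : ℝ) : Matrix (Fin 2) (Fin 2) ℝ :=
  1 - NormedSpace.exp (T • planktonA μ σ)

/-- The Green's matrix: G(t,s) = J⁻¹ exp((t − s)A) for s ≤ t, and
G(t,s) = J⁻¹ exp(TA) exp((t − s)A) for t < s. -/
noncomputable def planktonG (μ σ T : ℝ) (t s : ℝ) : Matrix (Fin 2) (Fin 2) ℝ :=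
  if s ≤ t then (planktonJ μ σ T)⁻¹ * NormedSpace.exp ((t - s) • planktonA μ σ)
  else (planktonJ μ σ T)⁻¹ * NormedSpace.exp (T • planktonA μ σ) *
    NormedSpace.exp ((t - s) • planktonA μ σ)


/-! With `ω = μ / 2` the matrix `A` is `ω • P` for a matrix `P` with `P * P = -1`, so
`x + y i ↦ x + y P` embeds `ℂ` into the 2×2 real matrices, and `exp (x • A)`, `J`, `J⁻¹` and `G`
are the images of `e^{iωx}`, `1 - e^{iωT}`, its inverse and `e^{iωy} / (1 - e^{iωT})`, where `y` is
the lag from `s` to `t` modulo `T`. In `ℂ`, with `c = ωT/2`,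
`e^{iωy} / (1 - e^{2ic}) = (sin (c - ωy) + i cos (c - ωy)) / (2 sin c)`,
which gives every entry of `G` as a constant times `sin (c - ωy)` or `cos (c - ωy)`.
As `s` runs over `[0, T]` the lag runs over `[0, T]` once, so each integral equals
`∫₀ᵀ |h (c - ωy)| dy = ω⁻¹ ∫_{-c}^{c} |h| = (2/ω) ∫₀^c |h|`, since `|sin|` and `|cos|` are even. -/

open Set intervalIntegral

namespace Complex

lemma one_sub_exp_two_mul_mul_I (c : ℂ) :
    1 - exp (2 * c * I) = -2 * I * sin c * exp (c * I) := by
  have hinv : exp (-c * I) * exp (c * I) = 1 := by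
    rw [← exp_add, neg_mul, neg_add_cancel, exp_zero]
  rw [sin, show 2 * c * I = c * I + c * I by ring, exp_add]
  linear_combination (exp (-c * I) - exp (c * I)) * exp (c * I) * I_sq - hinv

lemma exp_mul_I_div_one_sub_exp_two_mul_mul_I {a c : ℝ} (hc : Real.sin c ≠ 0) :
    exp (a * I) / (1 - exp (2 * c * I)) =
      ((Real.sin (c - a) / (2 * Real.sin c) : ℝ) : ℂ) +
        ((Real.cos (c - a) / (2 * Real.sin c) : ℝ) : ℂ) * I := by
  have hc' : sin c ≠ 0 := by exact_mod_cast hc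
  have hshift : exp (a * I) = (cos (c - a) - sin (c - a) * I) * exp (c * I) := by
    rw [← cos_neg, sub_eq_add_neg (cos _), ← neg_mul, ← sin_neg, ← exp_mul_I, ← exp_add]
    ring_nf
  rw [one_sub_exp_two_mul_mul_I, hshift]
  push_cast
  field_simp
  linear_combination -cos (c - a : ℂ) * I_sq

end Complex

lemma integral_neg_to_self_of_even {h : ℝ → ℝ} (hh : Continuous h) (heven : Function.Even h)
    (c : ℝ) : ∫ x in -c..c, h x = 2 * ∫ x in 0..c, h x := by
  have hleft : ∫ x in -c..0, h x = ∫ x in 0..c, h x := by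
    simpa only [heven _, neg_zero, neg_neg] using integral_comp_neg (a := -c) (b := 0) h
  rw [← integral_add_adjacent_intervals (hh.intervalIntegrable _ 0) (hh.intervalIntegrable 0 _),
    hleft, two_mul]

lemma integral_comp_half_sub_mul_of_even {h : ℝ → ℝ} (hh : Continuous h)
    (heven : Function.Even h) {ω : ℝ} (hω : ω ≠ 0) (T : ℝ) :
    ∫ y in 0..T, h (ω * T / 2 - ω * y) = 2 / ω * ∫ u in 0..ω * T / 2, h u := by
  rw [integral_comp_sub_mul h hω, mul_zero, sub_zero,
    show ω * T / 2 - ω * T = -(ω * T / 2) by ring, integral_neg_to_self_of_even hh heven,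
    smul_eq_mul]
  ring

/-- For `s, t ∈ [0, T]`, the time from `s` forward to `t` on the circle `ℝ / Tℤ`. -/
noncomputable def periodicLag (T t s : ℝ) : ℝ := if s ≤ t then t - s else T + (t - s)

lemma integral_comp_periodicLag {F : ℝ → ℝ} (hF : Continuous F) {T t : ℝ} (ht : t ∈ Icc 0 T) :
    ∫ s in 0..T, F (periodicLag T t s) = ∫ y in 0..T, F y := by
  have h₁ : EqOn (fun s => F (periodicLag T t s)) (fun s => F (t - s)) (uIoo 0 t) :=
    fun s hs => by
      rw [uIoo_of_le ht.1] at hs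
      simp [periodicLag, hs.2.le]
  have h₂ : EqOn (fun s => F (periodicLag T t s)) (fun s => F (T + t - s)) (uIoo t T) :=
    fun s hs => by
      rw [uIoo_of_le ht.2] at hs
      simp [periodicLag, not_le.2 hs.1, add_sub_assoc]
  rw [← integral_add_adjacent_intervals
      ((intervalIntegrable_congr_uIoo h₁).2 ((by fun_prop : Continuous _).intervalIntegrable _ _))
      ((intervalIntegrable_congr_uIoo h₂).2 ((by fun_prop : Continuous _).intervalIntegrable _ _)),
    integral_congr_uIoo h₁, integral_congr_uIoo h₂, integral_comp_sub_left, integral_comp_sub_left,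
    sub_self, sub_zero, add_sub_cancel_right, show T + t - T = t by ring,
    integral_add_adjacent_intervals (hF.intervalIntegrable _ _) (hF.intervalIntegrable _ _)]

lemma integral_abs_of_eq_mul_comp_periodicLag {F g : ℝ → ℝ} (hg : Continuous g)
    (heven : Function.Even fun x => |g x|) {ω T t K : ℝ} (hω : ω ≠ 0) (ht : t ∈ Icc 0 T)
    (hF : ∀ s, F s = K * g (ω * T / 2 - ω * periodicLag T t s)) :
    ∫ s in 0..T, |F s| = |K| * (2 / ω) * ∫ u in 0..ω * T / 2, |g u| := by
  simp_rw [hF, abs_mul]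
  rw [integral_const_mul,
    integral_comp_periodicLag (F := fun y => |g (ω * T / 2 - ω * y)|) (by fun_prop) ht,
    integral_comp_half_sub_mul_of_even (h := fun u => |g u|) (by fun_prop) heven hω, mul_assoc]

lemma Matrix.map_inv₀ {K n R F : Type*} [DivisionRing K] [Fintype n] [DecidableEq n]
    [CommRing R] [FunLike F K (Matrix n n R)] [RingHomClass F K (Matrix n n R)] (f : F) (z : K) :
    f z⁻¹ = (f z)⁻¹ := by
  obtain rfl | hz := eq_or_ne z 0
  · simp
  · exact (Matrix.inv_eq_right_inv (by rw [← map_mul, mul_inv_cancel₀ hz, map_one])).symm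

lemma planktonG_eq_periodicLag (μ σ T t s : ℝ) :
    planktonG μ σ T t s =
      (planktonJ μ σ T)⁻¹ * NormedSpace.exp (periodicLag T t s • planktonA μ σ) := by
  unfold planktonG periodicLag
  split_ifs
  · rfl
  · rw [mul_assoc, ← Matrix.exp_add_of_commute _ _ (((Commute.refl _).smul_left _).smul_right _),
      ← add_smul]

noncomputable def planktonP (ω σ : ℝ) : Matrix (Fin 2) (Fin 2) ℝ :=
  !![0, -σ / (4 * ω); 4 * ω / σ, 0]

lemma planktonP_mul_self {ω σ : ℝ} (hω : ω ≠ 0) (hσ : σ ≠ 0) :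
    planktonP ω σ * planktonP ω σ = -1 := by
  ext i j
  fin_cases i <;> fin_cases j <;> simp [planktonP] <;> field_simp

noncomputable def planktonCplx {ω σ : ℝ} (hω : ω ≠ 0) (hσ : σ ≠ 0) :
    ℂ →ₐ[ℝ] Matrix (Fin 2) (Fin 2) ℝ :=
  Complex.liftAux _ (planktonP_mul_self hω hσ)

section

variable {ω σ : ℝ} (hω : ω ≠ 0) (hσ : σ ≠ 0)

lemma planktonCplx_apply (x y : ℝ) :
    planktonCplx hω hσ (x + y * Complex.I) = !![x, -(σ / (4 * ω)) * y; 4 * ω / σ * y, x] := by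
  ext i j
  fin_cases i <;> fin_cases j <;>
    simp [planktonCplx, Complex.liftAux_apply, planktonP, Algebra.algebraMap_eq_smul_one] <;> ring

lemma smul_planktonA (x : ℝ) :
    x • planktonA (2 * ω) σ = planktonCplx hω hσ (x * ω * Complex.I) := by
  rw [show (x : ℂ) * ω * Complex.I = ((0 : ℝ) : ℂ) + ((x * ω : ℝ) : ℂ) * Complex.I by
      push_cast; ring,
    planktonCplx_apply]
  ext i j
  fin_cases i <;> fin_cases j <;> simp [planktonA] <;> field_simp
  ring

lemma exp_planktonCplx (z : ℂ) :
    NormedSpace.exp (planktonCplx hω hσ z) = planktonCplx hω hσ (Complex.exp z) := by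
  let _ := Matrix.linftyOpNormedRing (n := Fin 2) (α := ℝ)
  rw [Complex.exp_eq_exp_ℂ]
  exact (NormedSpace.map_exp (planktonCplx hω hσ)
    (planktonCplx hω hσ).toLinearMap.continuous_of_finiteDimensional z).symm

lemma planktonJ_eq (T : ℝ) :
    planktonJ (2 * ω) σ T = planktonCplx hω hσ (1 - Complex.exp (T * ω * Complex.I)) := by
  rw [planktonJ, smul_planktonA hω hσ, exp_planktonCplx, map_sub, map_one]

end

lemma planktonG_two_mul_eq_smul {ω σ T : ℝ} (hω : ω ≠ 0) (hσ : σ ≠ 0) (hsin : Real.sin (ω * T / 2) ≠ 0) (t s : ℝ) :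
    planktonG (2 * ω) σ T t s = (2 * Real.sin (ω * T / 2))⁻¹ •
      !![Real.sin (ω * T / 2 - ω * periodicLag T t s),
          -(σ / (4 * ω)) * Real.cos (ω * T / 2 - ω * periodicLag T t s);
        4 * ω / σ * Real.cos (ω * T / 2 - ω * periodicLag T t s),
          Real.sin (ω * T / 2 - ω * periodicLag T t s)] := by
  rw [planktonG_eq_periodicLag, planktonJ_eq hω hσ, ← Matrix.map_inv₀, smul_planktonA hω hσ,
    exp_planktonCplx, ← map_mul, ← div_eq_inv_mul,
    show (T : ℂ) * ω * Complex.I = 2 * ((ω * T / 2 : ℝ) : ℂ) * Complex.I by push_cast; ring,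
    show (periodicLag T t s : ℂ) * ω * Complex.I = ((ω * periodicLag T t s : ℝ) : ℂ) * Complex.I by
      push_cast; ring,
    Complex.exp_mul_I_div_one_sub_exp_two_mul_mul_I hsin, planktonCplx_apply]
  ext i j
  fin_cases i <;> fin_cases j <;> simp <;> ring

theorem green_matrix_entry_integrals_general (μ σ T : ℝ) (hμ : 0 < μ) (hσ : 0 < σ)
    (ω : ℝ) (hω : ω = μ / 2) (hsin : Real.sin (ω * T / 2) ≠ 0) :
    ∀ t ∈ Set.Icc (0 : ℝ) T,
      (∫ s in (0 : ℝ)..T, |planktonG μ σ T t s 0 0|) =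
        (1 / (ω * |Real.sin (ω * T / 2)|)) * ∫ u in (0 : ℝ)..(ω * T / 2), |Real.sin u| ∧
      (∫ s in (0 : ℝ)..T, |planktonG μ σ T t s 1 1|) =
        (1 / (ω * |Real.sin (ω * T / 2)|)) * ∫ u in (0 : ℝ)..(ω * T / 2), |Real.sin u| ∧
      (∫ s in (0 : ℝ)..T, |planktonG μ σ T t s 0 1|) =
        (σ / (4 * ω ^ 2 * |Real.sin (ω * T / 2)|)) *
          ∫ u in (0 : ℝ)..(ω * T / 2), |Real.cos u| ∧
      (∫ s in (0 : ℝ)..T, |planktonG μ σ T t s 1 0|) =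
        (4 / (σ * |Real.sin (ω * T / 2)|)) *
          ∫ u in (0 : ℝ)..(ω * T / 2), |Real.cos u| := by
  intro t ht
  obtain rfl : μ = 2 * ω := by rw [hω]; ring
  have hω₀ : 0 < ω := by linarith
  have hG := planktonG_two_mul_eq_smul hω₀.ne' hσ.ne' hsin t
  set K := (2 * Real.sin (ω * T / 2))⁻¹
  have hK : |K| = (2 * |Real.sin (ω * T / 2)|)⁻¹ := by rw [abs_inv, abs_mul, abs_two]
  refine ⟨?_, ?_, ?_, ?_⟩
  · refine (integral_abs_of_eq_mul_comp_periodicLag Real.continuous_sin (fun x => by simp)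
      hω₀.ne' ht (K := K) fun s => by simp [hG]).trans ?_
    rw [hK]; field_simp
  · refine (integral_abs_of_eq_mul_comp_periodicLag Real.continuous_sin (fun x => by simp)
      hω₀.ne' ht (K := K) fun s => by simp [hG]).trans ?_
    rw [hK]; field_simp
  · refine (integral_abs_of_eq_mul_comp_periodicLag Real.continuous_cos (fun x => by simp)
      hω₀.ne' ht (K := K * -(σ / (4 * ω))) fun s => by simp [hG, mul_assoc]).trans ?_
    rw [abs_mul, hK, abs_neg, abs_of_pos (by positivity : 0 < σ / (4 * ω))]; field_simp
  · refine (integral_abs_of_eq_mul_comp_periodicLag Real.continuous_cos (fun x => by simp)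
      hω₀.ne' ht (K := K * (4 * ω / σ)) fun s => by simp [hG, mul_assoc]).trans ?_
    rw [abs_mul, hK, abs_of_pos (by positivity : 0 < 4 * ω / σ)]; field_simp

/-- For every t ∈ [0, T] the integrals over [0, T] of the absolute values of the
entries of the Green's matrix are independent of t and are given explicitly:
∫₀ᵀ |G₁₁| = ∫₀ᵀ |G₂₂| = (1/(ω|sin(ωT/2)|)) ∫₀^{ωT/2} |sin u| du,
∫₀ᵀ |G₁₂| = (σ/(4ω²|sin(ωT/2)|)) ∫₀^{ωT/2} |cos u| du, and
∫₀ᵀ |G₂₁| = (4/(σ|sin(ωT/2)|)) ∫₀^{ωT/2} |cos u| du. -/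
theorem green_matrix_entry_integrals (μ σ T : ℝ) (hμ : 0 < μ) (hσ : 0 < σ) (hT : 0 < T)
    (ω : ℝ) (hω : ω = μ / 2) (hsin : Real.sin (ω * T / 2) ≠ 0) :
    ∀ t ∈ Set.Icc (0 : ℝ) T,
      (∫ s in (0 : ℝ)..T, |planktonG μ σ T t s 0 0|) =
        (1 / (ω * |Real.sin (ω * T / 2)|)) * ∫ u in (0 : ℝ)..(ω * T / 2), |Real.sin u| ∧
      (∫ s in (0 : ℝ)..T, |planktonG μ σ T t s 1 1|) =
        (1 / (ω * |Real.sin (ω * T / 2)|)) * ∫ u in (0 : ℝ)..(ω * T / 2), |Real.sin u| ∧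
      (∫ s in (0 : ℝ)..T, |planktonG μ σ T t s 0 1|) =
        (σ / (4 * ω ^ 2 * |Real.sin (ω * T / 2)|)) *
          ∫ u in (0 : ℝ)..(ω * T / 2), |Real.cos u| ∧
      (∫ s in (0 : ℝ)..T, |planktonG μ σ T t s 1 0|) =
        (4 / (σ * |Real.sin (ω * T / 2)|)) *
          ∫ u in (0 : ℝ)..(ω * T / 2), |Real.cos u| :=
  green_matrix_entry_integrals_general μ σ T hμ hσ ω hω hsin
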